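/- A complete family of n dual solutions exists: in an ideal LP formulation whose variables are partitioned into n groups S_1, …, S_n by the constraints Σ_{j∈S_i} x_j = 1, each group S_i is a set of pairwise incompatible indices; hence there exist n dual optimal solutions u¹, …, uⁿ such that for every index kl ∈ E there is some i with r_{kl}(uⁱ) = R_{kl}. -/

import Mathlib

/-!
Inside a group `S_i` the entries of a feasible `x` are nonnegative and sum to `1`, so two of them
cannot both be `1`, and an integral feasible `x` has exactly one index of `S_i` at value `1`.

For the dual family fix a group `i` and lower the costs on `S_i` by `R`. By idealness the modified
problem has an integral optimum `x̃`; it uses a single `j₀ ∈ S_i`, so its modified cost is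
`c ⬝ x̃ - R j₀ ≥ z*`, while `x*` has modified cost at most `z*` because `R ≥ 0`. So the modified
problem still has optimal value `z*`, and LP duality (Farkas' lemma, proved by Fourier–Motzkin
elimination) gives a dual solution `uⁱ` of it with value `z*`. It is feasible for the costs `c`,
with `r_j(uⁱ) ≥ R_j` on `S_i`. Conversely, complementary slackness with a best feasible `x` having
`x_j = 1` gives `r_j(u) ≤ c ⬝ x - z* = R_j` for every optimal dual `u`.
-/

open Matrix

/-- Primal feasibility for the LP with partition constraints:
Ax ≥ b, Σ_{j : grp j = i} x_j = 1 for each group i, x ≥ 0. -/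
def Feas {m n E : ℕ} (A : Matrix (Fin m) (Fin E) ℝ) (b : Fin m → ℝ)
    (grp : Fin E → Fin n) (x : Fin E → ℝ) : Prop :=
  b ≤ A.mulVec x ∧ (∀ i : Fin n, (∑ j : Fin E, if grp j = i then x j else 0) = 1) ∧ 0 ≤ x

/-- A 0/1 (integral) vector. -/
def Integral {E : ℕ} (x : Fin E → ℝ) : Prop := ∀ j, x j = 0 ∨ x j = 1

/-- Dual feasibility: u_q ≥ 0 and u_{grp j} + Σ_q A_{qj} u_q ≤ c_j for each index j. -/
def DualFeas {m n E : ℕ} (A : Matrix (Fin m) (Fin E) ℝ) (c : Fin E → ℝ)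
    (grp : Fin E → Fin n) (uq : Fin m → ℝ) (uv : Fin n → ℝ) : Prop :=
  0 ≤ uq ∧ ∀ j : Fin E, uv (grp j) + (∑ q : Fin m, A q j * uq q) ≤ c j

/-- Dual objective w(u) = b·u_q + Σ_i u_i. -/
def dualObj {m n : ℕ} (b : Fin m → ℝ) (uq : Fin m → ℝ) (uv : Fin n → ℝ) : ℝ :=
  b ⬝ᵥ uq + ∑ i : Fin n, uv i

/-- Reduced cost r_j(u) = c_j − u_{grp j} − Σ_q A_{qj} u_q. -/
def rc {m n E : ℕ} (A : Matrix (Fin m) (Fin E) ℝ) (c : Fin E → ℝ)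
    (grp : Fin E → Fin n) (uq : Fin m → ℝ) (uv : Fin n → ℝ) (j : Fin E) : ℝ :=
  c j - uv (grp j) - ∑ q : Fin m, A q j * uq q

open Finset

lemma Fintype.exists_between {ι κ α : Type*} [Fintype ι] [Fintype κ] [LinearOrder α]
    [Nonempty α] (f : ι → α) (g : κ → α) (h : ∀ i k, g k ≤ f i) :
    ∃ t, (∀ k, g k ≤ t) ∧ ∀ i, t ≤ f i := by
  rcases isEmpty_or_nonempty κ with hκ | hκ
  · rcases isEmpty_or_nonempty ι with hι | hι
    · exact ⟨Classical.arbitrary α, isEmptyElim, isEmptyElim⟩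
    · exact ⟨univ.inf' univ_nonempty f, isEmptyElim, fun i => inf'_le _ (mem_univ i)⟩
  · exact ⟨univ.sup' univ_nonempty g, fun k => le_sup' _ (mem_univ k),
      fun i => sup'_le _ _ fun k _ => h i k⟩

namespace FourierMotzkin

lemma exists_forall_mul_le {P : Type*} [Fintype P] (a r : P → ℝ)
    (hzero : ∀ i, a i = 0 → 0 ≤ r i)
    (hpair : ∀ i k, 0 < a i → a k < 0 → 0 ≤ a i * r k - a k * r i) :
    ∃ t : ℝ, ∀ i, a i * t ≤ r i := by
  obtain ⟨t, hlower, hupper⟩ := Fintype.exists_between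
    (fun i : {i // 0 < a i} => r i / a i) (fun k : {k // a k < 0} => r k / a k)
    fun i k => by
      rw [div_le_iff_of_neg k.2, div_mul_eq_mul_div, div_le_iff₀ i.2]
      linarith [hpair i k i.2 k.2]
  refine ⟨t, fun i => ?_⟩
  rcases lt_trichotomy (a i) 0 with hneg | hzero' | hpos
  · have := hlower ⟨i, hneg⟩
    rwa [div_le_iff_of_neg hneg, mul_comm] at this
  · simpa [hzero'] using hzero i hzero'
  · have := hupper ⟨i, hpos⟩
    rwa [le_div_iff₀ hpos, mul_comm] at this

variable {P : Type*} [DecidableEq P] (a : P → ℝ)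

/-- Eliminating a variable with coefficients `a`: the rows of the new system are the rows where it
does not occur and, for each pair of rows where it occurs with opposite signs, the nonnegative
combination of the two in which it cancels. -/
abbrev Row := {i // a i = 0} ⊕ {i // 0 < a i} × {k // a k < 0}

def combination : Matrix (Row a) P ℝ :=
  Matrix.of fun w => match w with
    | .inl i => Pi.single i.1 1
    | .inr (i, k) => Pi.single k.1 (a i.1) + Pi.single i.1 (-a k.1)

variable {a}

lemma combination_nonneg (w : Row a) : 0 ≤ combination a w := by
  rcases w with i | ⟨i, k⟩
  · exact Pi.single_nonneg.2 zero_le_one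
  · exact add_nonneg (Pi.single_nonneg.2 i.2.le) (Pi.single_nonneg.2 (neg_nonneg.2 k.2.le))

variable [Fintype P]

@[simp]
lemma combination_mulVec_inl (r : P → ℝ) (i : {i // a i = 0}) :
    (combination a *ᵥ r) (.inl i) = r i :=
  (single_dotProduct _ _ _).trans (one_mul _)

@[simp]
lemma combination_mulVec_inr (r : P → ℝ) (i : {i // 0 < a i}) (k : {k // a k < 0}) :
    (combination a *ᵥ r) (.inr (i, k)) = a i * r k - a k * r i := by
  change (Pi.single k.1 (a i.1) + Pi.single i.1 (-a k.1)) ⬝ᵥ r = _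
  rw [add_dotProduct, single_dotProduct, single_dotProduct]
  ring

lemma combination_mulVec_self : combination a *ᵥ a = 0 := by
  ext (i | ⟨i, k⟩)
  · simpa using i.2
  · simp only [combination_mulVec_inr, Pi.zero_apply]
    ring

lemma exists_forall_mul_le_of_combination {r : P → ℝ} (hr : 0 ≤ combination a *ᵥ r) :
    ∃ t : ℝ, ∀ i, a i * t ≤ r i :=
  exists_forall_mul_le a r (fun i hi => by simpa using hr (.inl ⟨i, hi⟩))
    fun i k hi hk => by simpa using hr (.inr (⟨i, hi⟩, ⟨k, hk⟩))

end FourierMotzkin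

namespace Matrix

open FourierMotzkin in
theorem farkas_fin {q : ℕ} {P : Type*} [Fintype P] (A : Matrix P (Fin q) ℝ) (b : P → ℝ)
    (h : ¬ ∃ y, A *ᵥ y ≤ b) : ∃ z, 0 ≤ z ∧ z ᵥ* A = 0 ∧ z ⬝ᵥ b < 0 := by
  classical
  induction q generalizing P with
  | zero =>
    obtain ⟨i, hi⟩ : ∃ i, b i < 0 := by
      by_contra! hb
      exact h ⟨0, fun i => by simpa [mulVec] using hb i⟩
    exact ⟨Pi.single i 1, Pi.single_nonneg.2 zero_le_one, Subsingleton.elim _ _,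
      by simpa using hi⟩
  | succ q ih =>
    set a : P → ℝ := fun i => A i (Fin.last q)
    set A' : Matrix P (Fin q) ℝ := A.submatrix id Fin.castSucc
    have hsnoc : ∀ y t, A *ᵥ Fin.snoc y t = A' *ᵥ y + t • a := by
      intro y t
      ext i
      simp [mulVec, dotProduct, Fin.sum_univ_castSucc, A', a, mul_comm]
    have hinfeas : ¬ ∃ y, (combination a * A') *ᵥ y ≤ combination a *ᵥ b := by
      rintro ⟨y, hy⟩
      have hr : 0 ≤ combination a *ᵥ (b - A' *ᵥ y) := by
        rwa [mulVec_sub, mulVec_mulVec, sub_nonneg]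
      obtain ⟨t, ht⟩ := exists_forall_mul_le_of_combination hr
      refine h ⟨Fin.snoc y t, fun i => ?_⟩
      have := ht i
      simp only [hsnoc, Pi.add_apply, Pi.smul_apply, smul_eq_mul, Pi.sub_apply] at this ⊢
      linarith
    obtain ⟨z, hz0, hzA, hzb⟩ := ih _ _ hinfeas
    refine ⟨z ᵥ* combination a, fun i => ?_, ?_, ?_⟩
    · exact dotProduct_nonneg_of_nonneg hz0 fun w => combination_nonneg w i
    · ext j
      refine Fin.lastCases ?_ (fun j => ?_) j
      · change (z ᵥ* combination a) ⬝ᵥ a = 0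
        rw [← dotProduct_mulVec, combination_mulVec_self, dotProduct_zero]
      · change ((z ᵥ* combination a) ᵥ* A') j = 0
        rw [vecMul_vecMul, hzA, Pi.zero_apply]
    · rwa [← dotProduct_mulVec]

lemma exists_feasible_dotProduct_lt {P C : Type*} [Fintype C] {M : Matrix P C ℝ} {d : P → ℝ}
    {c xs x : C → ℝ} {τ : ℝ}
    (hxs0 : 0 ≤ xs) (hxsM : d ≤ M *ᵥ xs) (hx0 : 0 ≤ x) (hτ : 0 ≤ τ) (hxM : τ • d ≤ M *ᵥ x)
    (hcx : c ⬝ᵥ x < τ * c ⬝ᵥ xs) : ∃ x', 0 ≤ x' ∧ d ≤ M *ᵥ x' ∧ c ⬝ᵥ x' < c ⬝ᵥ xs := by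
  have hτ1 : 0 < τ + 1 := by linarith
  -- `x / τ` would do for `τ > 0`; the average below also covers `τ = 0`, where `x` is a ray
  refine ⟨(τ + 1)⁻¹ • (x + xs), smul_nonneg (inv_nonneg.2 hτ1.le) (add_nonneg hx0 hxs0),
    fun p => ?_, ?_⟩
  · rw [mulVec_smul, mulVec_add, Pi.smul_apply, smul_eq_mul, le_inv_mul_iff₀ hτ1, Pi.add_apply]
    linarith [show τ * d p ≤ (M *ᵥ x) p from hxM p, show d p ≤ (M *ᵥ xs) p from hxsM p]
  · rw [dotProduct_smul, dotProduct_add, smul_eq_mul, inv_mul_lt_iff₀ hτ1]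
    linarith

variable {P C : Type*} [Fintype P] [Fintype C]

theorem farkas (A : Matrix P C ℝ) (b : P → ℝ) (h : ¬ ∃ y, A *ᵥ y ≤ b) :
    ∃ z, 0 ≤ z ∧ z ᵥ* A = 0 ∧ z ⬝ᵥ b < 0 := by
  set e := (Fintype.equivFin C).symm
  obtain ⟨z, hz0, hzA, hzb⟩ := farkas_fin (A.submatrix id e) b fun ⟨y, hy⟩ =>
    h ⟨y ∘ e.symm, by rwa [submatrix_mulVec_equiv] at hy⟩
  refine ⟨z, hz0, ?_, hzb⟩
  ext c
  simpa [vecMul, dotProduct] using congrFun hzA (e.symm c)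

theorem weak_duality {M : Matrix P C ℝ} {d : P → ℝ} {c : C → ℝ} {x : C → ℝ} {y : P → ℝ}
    (hx0 : 0 ≤ x) (hxM : d ≤ M *ᵥ x) (hy0 : 0 ≤ y) (hyM : y ᵥ* M ≤ c) :
    d ⬝ᵥ y ≤ c ⬝ᵥ x :=
  calc d ⬝ᵥ y ≤ (M *ᵥ x) ⬝ᵥ y := dotProduct_le_dotProduct_of_nonneg_right hxM hy0
    _ = (y ᵥ* M) ⬝ᵥ x := by rw [dotProduct_comm, dotProduct_mulVec]
    _ ≤ c ⬝ᵥ x := dotProduct_le_dotProduct_of_nonneg_right hyM hx0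

theorem exists_dual_optimal (M : Matrix P C ℝ) (d : P → ℝ) (c : C → ℝ) {v : ℝ}
    (hv : IsLeast {z | ∃ x, 0 ≤ x ∧ d ≤ M *ᵥ x ∧ c ⬝ᵥ x = z} v) :
    ∃ y, 0 ≤ y ∧ y ᵥ* M ≤ c ∧ d ⬝ᵥ y = v := by
  classical
  obtain ⟨xs, hxs0, hxsM, rfl⟩ := hv.1
  -- the dual constraints `Mᵀ y ≤ c`, `y ≥ 0` and `d ⬝ y ≥ c ⬝ xs` as one system `K y ≤ h`
  set K : Matrix (C ⊕ (P ⊕ Unit)) P ℝ := fromRows Mᵀ (fromRows (-1) (replicateRow Unit (-d)))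
  set h : C ⊕ (P ⊕ Unit) → ℝ := Sum.elim c (Sum.elim 0 fun _ => -(c ⬝ᵥ xs))
  obtain ⟨y, hy⟩ : ∃ y, K *ᵥ y ≤ h := by
    by_contra hK
    obtain ⟨z, hz0, hzK, hzh⟩ := farkas K h hK
    obtain ⟨x, s, τ, rfl⟩ : ∃ x s τ, z = Sum.elim x (Sum.elim s fun _ : Unit => τ) :=
      ⟨z ∘ .inl, z ∘ .inr ∘ .inl, z (.inr (.inr ())), by ext (_ | _ | _) <;> rfl⟩
    have hrow : (fun _ : Unit => τ) ᵥ* replicateRow Unit (-d) = -(τ • d) := by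
      ext; simp [vecMul, dotProduct, replicateRow]
    have hobj : (fun _ : Unit => τ) ⬝ᵥ (fun _ => -(c ⬝ᵥ xs)) = -(τ * c ⬝ᵥ xs) := by
      simp [dotProduct]
    simp only [K, h, vecMul_fromRows, Sum.elim_comp_inl, Sum.elim_comp_inr, hrow, vecMul_transpose,
      vecMul_neg, vecMul_one, sumElim_dotProduct_sumElim, dotProduct_zero, hobj] at hzK hzh
    have hxM : τ • d ≤ M *ᵥ x := fun p => by
      have := congrFun hzK p
      simp only [Pi.add_apply, Pi.neg_apply, Pi.zero_apply] at this
      linarith [show 0 ≤ s p from hz0 (.inr (.inl p))]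
    obtain ⟨x', hx'0, hx'M, hx'c⟩ := exists_feasible_dotProduct_lt (c := c) (x := x) (τ := τ)
      hxs0 hxsM (fun i => hz0 (.inl i)) (hz0 (.inr (.inr ()))) hxM
      (by rw [dotProduct_comm]; linarith)
    exact not_lt.2 (hv.2 ⟨x', hx'0, hx'M, rfl⟩) hx'c
  simp only [K, h, fromRows_mulVec, Sum.elim_le_elim_iff, mulVec_transpose, neg_mulVec,
    one_mulVec, neg_nonpos, replicateRow_mulVec_eq_const] at hy
  obtain ⟨hyM, hy0, hyd⟩ := hy
  refine ⟨y, hy0, hyM, le_antisymm (weak_duality hxs0 hxsM hy0 hyM) ?_⟩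
  simpa using hyd ()

theorem exists_dual_optimal_of_eq {Q : Type*} [Fintype Q] (M : Matrix P C ℝ) (N : Matrix Q C ℝ)
    (d : P → ℝ) (e : Q → ℝ) (c : C → ℝ) {v : ℝ}
    (hv : IsLeast {z | ∃ x, 0 ≤ x ∧ d ≤ M *ᵥ x ∧ N *ᵥ x = e ∧ c ⬝ᵥ x = z} v) :
    ∃ y w, 0 ≤ y ∧ y ᵥ* M + w ᵥ* N ≤ c ∧ d ⬝ᵥ y + e ⬝ᵥ w = v := by
  have hsplit : ∀ x, Sum.elim d (Sum.elim e (-e)) ≤ fromRows M (fromRows N (-N)) *ᵥ x ↔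
      d ≤ M *ᵥ x ∧ N *ᵥ x = e := fun x => by
    simp only [fromRows_mulVec, Sum.elim_le_elim_iff, neg_mulVec, neg_le_neg_iff,
      le_antisymm_iff (a := N *ᵥ x), and_comm (a := N *ᵥ x ≤ e)]
  obtain ⟨y, hy0, hyc, hyv⟩ := exists_dual_optimal (fromRows M (fromRows N (-N)))
    (Sum.elim d (Sum.elim e (-e))) c (v := v) (by simpa only [hsplit, and_assoc] using hv)
  obtain ⟨y, w₁, w₂, rfl⟩ : ∃ y' w₁ w₂, y = Sum.elim y' (Sum.elim w₁ w₂) :=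
    ⟨y ∘ .inl, y ∘ .inr ∘ .inl, y ∘ .inr ∘ .inr, by ext (_ | _ | _) <;> rfl⟩
  simp only [vecMul_fromRows, Sum.elim_comp_inl, Sum.elim_comp_inr, vecMul_neg] at hyc
  simp only [sumElim_dotProduct_sumElim, neg_dotProduct] at hyv
  refine ⟨y, w₁ - w₂, fun p => hy0 (.inl p), ?_, ?_⟩
  · rwa [sub_vecMul, sub_eq_add_neg]
  · rw [dotProduct_sub]
    linarith

end Matrix

def groupMatrix {n E : ℕ} (grp : Fin E → Fin n) : Matrix (Fin n) (Fin E) ℝ :=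
  Matrix.of fun i j => if grp j = i then 1 else 0

section GroupedLP

variable {m n E : ℕ} {A : Matrix (Fin m) (Fin E) ℝ} {b : Fin m → ℝ} {c : Fin E → ℝ}
  {grp : Fin E → Fin n} {x : Fin E → ℝ} {uq : Fin m → ℝ} {uv : Fin n → ℝ}

lemma groupMatrix_mulVec_apply (i : Fin n) :
    (groupMatrix grp *ᵥ x) i = ∑ j, if grp j = i then x j else 0 := by
  simp [groupMatrix, mulVec, dotProduct, ite_mul]

lemma vecMul_groupMatrix_apply (w : Fin n → ℝ) (j : Fin E) :
    (w ᵥ* groupMatrix grp) j = w (grp j) := by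
  simp [groupMatrix, vecMul, dotProduct]

lemma feas_iff : Feas A b grp x ↔ 0 ≤ x ∧ b ≤ A *ᵥ x ∧ groupMatrix grp *ᵥ x = 1 := by
  simp only [Feas, funext_iff, groupMatrix_mulVec_apply, Pi.one_apply]
  tauto

lemma dualFeas_iff :
    DualFeas A c grp uq uv ↔ 0 ≤ uq ∧ uq ᵥ* A + uv ᵥ* groupMatrix grp ≤ c := by
  simp only [DualFeas, Pi.le_def, Pi.add_apply, vecMul_groupMatrix_apply]
  simp only [vecMul, dotProduct, mul_comm (uq _), add_comm (uv _)]

lemma dualObj_eq : dualObj b uq uv = b ⬝ᵥ uq + 1 ⬝ᵥ uv := by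
  rw [dualObj, one_dotProduct]

lemma rc_eq : rc A c grp uq uv = c - (uq ᵥ* A + uv ᵥ* groupMatrix grp) := by
  ext j
  simp only [rc, Pi.sub_apply, Pi.add_apply, vecMul_groupMatrix_apply]
  simp only [vecMul, dotProduct, mul_comm (uq _)]
  ring

lemma rc_sub (f : Fin E → ℝ) (j : Fin E) :
    rc A (c - f) grp uq uv j = rc A c grp uq uv j - f j := by
  simp only [rc, Pi.sub_apply]
  ring

theorem exists_dualFeas_dualObj_eq {v : ℝ}
    (hv : IsLeast {z | ∃ x, Feas A b grp x ∧ c ⬝ᵥ x = z} v) :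
    ∃ uq uv, DualFeas A c grp uq uv ∧ dualObj b uq uv = v := by
  simp only [feas_iff, and_assoc] at hv
  obtain ⟨uq, uv, huq, hu, hobj⟩ := exists_dual_optimal_of_eq A (groupMatrix grp) b 1 c hv
  exact ⟨uq, uv, dualFeas_iff.2 ⟨huq, hu⟩, by rwa [dualObj_eq]⟩

lemma DualFeas.rc_nonneg (hu : DualFeas A c grp uq uv) : 0 ≤ rc A c grp uq uv := by
  rw [rc_eq, sub_nonneg]
  exact (dualFeas_iff.1 hu).2

lemma DualFeas.mono {c' : Fin E → ℝ} (hu : DualFeas A c' grp uq uv) (hc : c' ≤ c) :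
    DualFeas A c grp uq uv :=
  ⟨hu.1, fun j => (hu.2 j).trans (hc j)⟩

lemma dotProduct_sub_dualObj (hx : groupMatrix grp *ᵥ x = 1) :
    c ⬝ᵥ x - dualObj b uq uv = rc A c grp uq uv ⬝ᵥ x + uq ⬝ᵥ (A *ᵥ x - b) := by
  rw [rc_eq, dualObj_eq, sub_dotProduct, add_dotProduct, ← dotProduct_mulVec, ← dotProduct_mulVec,
    hx, dotProduct_sub, dotProduct_comm b, dotProduct_comm 1]
  ring

theorem dualObj_add_rc_le (hx : Feas A b grp x) (hu : DualFeas A c grp uq uv) {j : Fin E}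
    (hxj : x j = 1) : dualObj b uq uv + rc A c grp uq uv j ≤ c ⬝ᵥ x := by
  obtain ⟨hx0, hAx, hgrp⟩ := feas_iff.1 hx
  have hid : c ⬝ᵥ x - dualObj b uq uv = rc A c grp uq uv ⬝ᵥ x + uq ⬝ᵥ (A *ᵥ x - b) :=
    dotProduct_sub_dualObj hgrp
  have hrc : rc A c grp uq uv j ≤ rc A c grp uq uv ⬝ᵥ x := by
    simpa [hxj, dotProduct] using
      single_le_sum (fun k _ => mul_nonneg (hu.rc_nonneg k) (hx0 k)) (mem_univ j)
  have hslack : 0 ≤ uq ⬝ᵥ (A *ᵥ x - b) := dotProduct_nonneg_of_nonneg hu.1 (sub_nonneg.2 hAx)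
  linarith

lemma Feas.eq_of_grp_eq (hx : Feas A b grp x) {j j' : Fin E} (hg : grp j = grp j')
    (hj : x j = 1) (hj' : x j' = 1) : j = j' := by
  by_contra hne
  have hle : ∑ k ∈ {j, j'}, (if grp k = grp j' then x k else 0)
      ≤ ∑ k, if grp k = grp j' then x k else 0 :=
    sum_le_sum_of_subset_of_nonneg (subset_univ _) fun k _ _ => by
      split_ifs
      exacts [hx.2.2 k, le_rfl]
  rw [sum_pair hne, if_pos hg, if_pos rfl, hj, hj', hx.2.1 (grp j')] at hle
  norm_num at hle

lemma Feas.exists_eq_one (hx : Feas A b grp x) (hint : Integral x) (i : Fin n) :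
    ∃ j, grp j = i ∧ x j = 1 := by
  by_contra! h
  have hsum := hx.2.1 i
  rw [sum_eq_zero fun j _ => ?_] at hsum
  · exact zero_ne_one hsum
  · split_ifs with hj
    exacts [(hint j).resolve_right (h j hj), rfl]

lemma Feas.indicator_dotProduct (hx : Feas A b grp x) (hint : Integral x) (R : Fin E → ℝ)
    {j₀ : Fin E} (hj₀ : x j₀ = 1) : (grp ⁻¹' {grp j₀}).indicator R ⬝ᵥ x = R j₀ := by
  rw [dotProduct, sum_eq_single j₀]
  · simp [hj₀]
  · intro j _ hj
    by_cases hg : grp j = grp j₀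
    · have hx0 : x j = 0 :=
        (hint j).resolve_right fun hj1 => hj (hx.eq_of_grp_eq hg hj1 hj₀)
      simp [hx0]
    · simp [hg]
  · simp

end GroupedLP

section CompleteFamily

variable {m n E : ℕ} {A : Matrix (Fin m) (Fin E) ℝ} {b : Fin m → ℝ} {c : Fin E → ℝ}
  {grp : Fin E → Fin n} {zstar : ℝ} {R : Fin E → ℝ}

lemma nonneg_of_forall_isLeast_add (hz : IsLeast {z | ∃ x, Feas A b grp x ∧ c ⬝ᵥ x = z} zstar)
    (hR : ∀ j, IsLeast {z | ∃ x, Feas A b grp x ∧ x j = 1 ∧ c ⬝ᵥ x = z} (zstar + R j)) :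
    0 ≤ R := fun j => by
  obtain ⟨x, hx, -, hcx⟩ := (hR j).1
  show 0 ≤ R j
  linarith [hz.2 ⟨x, hx, hcx⟩]

theorem isLeast_sub_indicator (hz : IsLeast {z | ∃ x, Feas A b grp x ∧ c ⬝ᵥ x = z} zstar)
    (hideal : ∀ c' : Fin E → ℝ, (∃ x0, Feas A b grp x0) →
      ∃ xt, Feas A b grp xt ∧ Integral xt ∧ ∀ y, Feas A b grp y → c' ⬝ᵥ xt ≤ c' ⬝ᵥ y)
    (hR : ∀ j, IsLeast {z | ∃ x, Feas A b grp x ∧ x j = 1 ∧ c ⬝ᵥ x = z} (zstar + R j))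
    (i : Fin n) :
    IsLeast {z | ∃ x, Feas A b grp x ∧ (c - (grp ⁻¹' {i}).indicator R) ⬝ᵥ x = z} zstar := by
  set c' := c - (grp ⁻¹' {i}).indicator R
  obtain ⟨xs, hxs, hcxs⟩ := hz.1
  obtain ⟨xt, hxt, hint, hopt⟩ := hideal c' ⟨xs, hxs⟩
  obtain ⟨j₀, rfl, hj₀⟩ := hxt.exists_eq_one hint i
  have hlower : ∀ y, Feas A b grp y → zstar ≤ c' ⬝ᵥ y := fun y hy => by
    refine le_trans ?_ (hopt y hy)
    rw [sub_dotProduct, hxt.indicator_dotProduct hint R hj₀]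
    linarith [(hR j₀).2 ⟨xt, hxt, hj₀, rfl⟩]
  refine ⟨⟨xs, hxs, le_antisymm ?_ (hlower xs hxs)⟩, fun _ ⟨y, hy, hcy⟩ => hcy ▸ hlower y hy⟩
  rw [sub_dotProduct, hcxs, sub_le_self_iff]
  exact dotProduct_nonneg_of_nonneg
    (fun j => Set.indicator_nonneg (fun k _ => nonneg_of_forall_isLeast_add hz hR k) j) hxs.2.2

theorem exists_dual_optimal_rc_eq_on_group
    (hz : IsLeast {z | ∃ x, Feas A b grp x ∧ c ⬝ᵥ x = z} zstar)
    (hideal : ∀ c' : Fin E → ℝ, (∃ x0, Feas A b grp x0) →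
      ∃ xt, Feas A b grp xt ∧ Integral xt ∧ ∀ y, Feas A b grp y → c' ⬝ᵥ xt ≤ c' ⬝ᵥ y)
    (hR : ∀ j, IsLeast {z | ∃ x, Feas A b grp x ∧ x j = 1 ∧ c ⬝ᵥ x = z} (zstar + R j))
    (i : Fin n) :
    ∃ uq uv, (DualFeas A c grp uq uv ∧ dualObj b uq uv = zstar) ∧
      ∀ j, grp j = i → rc A c grp uq uv j = R j := by
  obtain ⟨uq, uv, hu, hobj⟩ := exists_dualFeas_dualObj_eq (isLeast_sub_indicator hz hideal hR i)
  have hu' : DualFeas A c grp uq uv := hu.mono <| sub_le_self _ fun j =>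
    Set.indicator_nonneg (fun k _ => nonneg_of_forall_isLeast_add hz hR k) j
  refine ⟨uq, uv, ⟨hu', hobj⟩, fun j hj => le_antisymm ?_ ?_⟩
  · obtain ⟨x, hx, hxj, hcx⟩ := (hR j).1
    linarith [dualObj_add_rc_le hx hu' hxj]
  · have := hu.rc_nonneg j
    rwa [Pi.zero_apply, rc_sub, Set.indicator_of_mem (show j ∈ grp ⁻¹' {i} from hj),
      sub_nonneg] at this

end CompleteFamily

theorem stmt12_general {m n E : ℕ} (A : Matrix (Fin m) (Fin E) ℝ) (b : Fin m → ℝ)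
    (c : Fin E → ℝ) (grp : Fin E → Fin n) (zstar : ℝ)
    (hz : IsLeast {z | ∃ x : Fin E → ℝ, Feas A b grp x ∧ c ⬝ᵥ x = z} zstar)
    (hideal : ∀ c' : Fin E → ℝ, (∃ x0 : Fin E → ℝ, Feas A b grp x0) →
      ∃ xt : Fin E → ℝ, Feas A b grp xt ∧ Integral xt ∧
        ∀ y : Fin E → ℝ, Feas A b grp y → c' ⬝ᵥ xt ≤ c' ⬝ᵥ y)
    (R : Fin E → ℝ)
    (hR : ∀ j : Fin E,
      IsLeast {z | ∃ x : Fin E → ℝ, Feas A b grp x ∧ x j = 1 ∧ c ⬝ᵥ x = z}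
        (zstar + R j)) :
    (∀ x : Fin E → ℝ, Feas A b grp x → Integral x →
      ∀ j j' : Fin E, grp j = grp j' → x j = 1 → x j' = 1 → j = j') ∧
    ∃ (uq : Fin n → Fin m → ℝ) (uv : Fin n → Fin n → ℝ),
      (∀ i : Fin n, DualFeas A c grp (uq i) (uv i) ∧ dualObj b (uq i) (uv i) = zstar) ∧
      ∀ kl : Fin E, ∃ i : Fin n, rc A c grp (uq i) (uv i) kl = R kl := by
  refine ⟨fun x hx _ j j' hg hj hj' => hx.eq_of_grp_eq hg hj hj', ?_⟩
  choose uq uv hopt hrc using exists_dual_optimal_rc_eq_on_group hz hideal hR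
  exact ⟨uq, uv, hopt, fun kl => ⟨grp kl, hrc (grp kl) kl rfl⟩⟩

/-- A complete family of n dual solutions exists: each group {j : grp j = i} is a set of
pairwise incompatible indices, hence (each index lying in some feasible integral
solution) there exist n dual optimal solutions u¹,…,uⁿ such that for every index kl
there is some i with r_{kl}(uⁱ) = R_{kl}. -/
theorem stmt12 {m n E : ℕ} (A : Matrix (Fin m) (Fin E) ℝ) (b : Fin m → ℝ)
    (c : Fin E → ℝ) (grp : Fin E → Fin n) (zstar : ℝ)
    (hz : IsLeast {z | ∃ x : Fin E → ℝ, Feas A b grp x ∧ c ⬝ᵥ x = z} zstar)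
    (hideal : ∀ c' : Fin E → ℝ, (∃ x0 : Fin E → ℝ, Feas A b grp x0) →
      ∃ xt : Fin E → ℝ, Feas A b grp xt ∧ Integral xt ∧
        ∀ y : Fin E → ℝ, Feas A b grp y → c' ⬝ᵥ xt ≤ c' ⬝ᵥ y)
    (hmem : ∀ j : Fin E, ∃ x : Fin E → ℝ, Feas A b grp x ∧ Integral x ∧ x j = 1)
    (R : Fin E → ℝ)
    (hR : ∀ j : Fin E,
      IsLeast {z | ∃ x : Fin E → ℝ, Feas A b grp x ∧ x j = 1 ∧ c ⬝ᵥ x = z}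
        (zstar + R j)) :
    (∀ x : Fin E → ℝ, Feas A b grp x → Integral x →
      ∀ j j' : Fin E, grp j = grp j' → x j = 1 → x j' = 1 → j = j') ∧
    ∃ (uq : Fin n → Fin m → ℝ) (uv : Fin n → Fin n → ℝ),
      (∀ i : Fin n, DualFeas A c grp (uq i) (uv i) ∧ dualObj b (uq i) (uv i) = zstar) ∧
      ∀ kl : Fin E, ∃ i : Fin n, rc A c grp (uq i) (uv i) kl = R kl :=
  stmt12_general A b c grp zstar hz hideal R hR
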